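/- arXiv:1505.04822 — 2 statements merged into one kernel-verified Lean document; each statement's English description precedes it below -/
import Mathlib

section
/- For every natural number j ≥ 1 and integer n ≥ j, the unsigned Stirling number of the first kind evaluated at negative arguments via polynomial extension satisfies s(-ℓ, -ℓ-j) = S(ℓ+j, ℓ) for all integers ℓ ≥ 1, i.e., if q_j is the unique polynomial of degree 2j with q_j(m) = s(m, m-j) for all sufficiently large natural numbers m, then q_j(-ℓ) = S(ℓ+j, ℓ). -/
open Polynomial

/-- Unsigned Stirling numbers of the first kind. -/
def stirling1 : ℕ → ℕ → ℕ
  | 0, 0 => 1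
  | 0, _+1 => 0
  | _+1, 0 => 0
  | n+1, k+1 => stirling1 n k + n * stirling1 n (k+1)

/-- Stirling numbers of the second kind. -/
def stirling2 : ℕ → ℕ → ℕ
  | 0, 0 => 1
  | 0, _+1 => 0
  | _+1, 0 => 0
  | n+1, k+1 => stirling2 n k + (k+1) * stirling2 n (k+1)

/-!
Both `m ↦ s(m, m - j)` and `ℓ ↦ S(ℓ + j, ℓ)` are governed by the same difference equation
`q_{j+1}(x + 1) - q_{j+1}(x) = x q_j(x)`, read at `x = m` and at `x = -ℓ - 1` respectively, with
`q_0 = 1` and `q_{j+1}(0) = 0`. Its polynomial solution exists (Bernoulli polynomials are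
antidifferences of monomials) and, a polynomial being determined by its values at infinitely many
integers, it is the polynomial `q` of the statement.
-/

theorem stirling1_eq_stirlingFirst : stirling1 = Nat.stirlingFirst := by
  funext n k
  induction n generalizing k with
  | zero => cases k <;> rfl
  | succ n ih =>
    cases k with
    | zero => rfl
    | succ k => rw [stirling1, Nat.stirlingFirst_succ_succ, ih, ih, add_comm]

theorem stirling2_eq_stirlingSecond : stirling2 = Nat.stirlingSecond := by
  funext n k
  induction n generalizing k with
  | zero => cases k <;> rfl
  | succ n ih =>
    cases k with
    | zero => rfl
    | succ k => rw [stirling2, Nat.stirlingSecond_succ_succ, ih, ih, add_comm]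

theorem Nat.stirlingFirst_succ_self_sub {m : ℕ} (hm : m ≠ 0) (j : ℕ) :
    stirlingFirst (m + 1) (m - j) =
      m * stirlingFirst m (m - j) + stirlingFirst m (m - (j + 1)) := by
  rcases lt_or_ge j m with hjm | hmj
  · obtain ⟨k, hk⟩ : ∃ k, m - j = k + 1 := ⟨m - (j + 1), by omega⟩
    rw [hk, stirlingFirst_succ_succ, show m - (j + 1) = k by omega]
  · obtain ⟨n, rfl⟩ := exists_eq_succ_of_ne_zero hm
    rw [Nat.sub_eq_zero_of_le hmj, Nat.sub_eq_zero_of_le (by omega)]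
    simp [stirlingFirst_succ_zero]

namespace Polynomial

theorem eq_of_eventually_eval_natCast_eq {R : Type*} [CommRing R] [IsDomain R] [CharZero R]
    {p q : R[X]} (h : ∀ᶠ m : ℕ in Filter.atTop, p.eval (m : R) = q.eval (m : R)) : p = q := by
  obtain ⟨M, hM⟩ := Filter.eventually_atTop.mp h
  refine eq_of_infinite_eval_eq p q (Set.Infinite.mono ?_ ((Set.Ici_infinite M).image
    Nat.cast_injective.injOn))
  rintro _ ⟨m, hm, rfl⟩
  exact hM m hm

noncomputable def antidiff (p : ℚ[X]) : ℚ[X] :=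
  p.sum fun n a => C (a / (n + 1)) * bernoulli (n + 1)

theorem eval_add_one_antidiff (p : ℚ[X]) (x : ℚ) :
    (antidiff p).eval (x + 1) = (antidiff p).eval x + p.eval x := by
  rw [antidiff, Polynomial.sum, eval_finsetSum, eval_finsetSum, eval_eq_sum, Polynomial.sum,
    ← Finset.sum_add_distrib]
  refine Finset.sum_congr rfl fun n _ => ?_
  have hB := bernoulli_eval_one_add (n + 1) x
  rw [add_comm] at hB
  simp only [eval_mul, eval_C, hB, Nat.add_sub_cancel]
  push_cast
  field_simp

end Polynomial

noncomputable def stirlingFirstPoly : ℕ → ℚ[X]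
  | 0 => 1
  | j + 1 =>
    antidiff (X * stirlingFirstPoly j) - C ((antidiff (X * stirlingFirstPoly j)).eval 0)

theorem stirlingFirstPoly_succ_eval_add_one (j : ℕ) (x : ℚ) :
    (stirlingFirstPoly (j + 1)).eval (x + 1) =
      (stirlingFirstPoly (j + 1)).eval x + x * (stirlingFirstPoly j).eval x := by
  simp only [stirlingFirstPoly, eval_sub, eval_C, eval_add_one_antidiff, eval_mul, eval_X]
  ring

theorem stirlingFirstPoly_succ_eval_zero (j : ℕ) : (stirlingFirstPoly (j + 1)).eval 0 = 0 := by
  simp [stirlingFirstPoly]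

theorem stirlingFirstPoly_eval_natCast (j : ℕ) {m : ℕ} (hm : m ≠ 0) :
    (stirlingFirstPoly j).eval (m : ℚ) = Nat.stirlingFirst m (m - j) := by
  induction j generalizing m with
  | zero => simp [stirlingFirstPoly, Nat.stirlingFirst_self]
  | succ j ih =>
    induction m with
    | zero => exact absurd rfl hm
    | succ m ihm =>
      rcases eq_or_ne m 0 with rfl | hm0
      · simpa [Nat.stirlingFirst_succ_zero, stirlingFirstPoly_succ_eval_zero] using
          stirlingFirstPoly_succ_eval_add_one j 0
      · rw [Nat.cast_succ, stirlingFirstPoly_succ_eval_add_one, ihm hm0, ih hm0,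
          Nat.add_sub_add_right, Nat.stirlingFirst_succ_self_sub hm0]
        push_cast
        ring

theorem stirlingFirstPoly_eval_neg_natCast (j ℓ : ℕ) :
    (stirlingFirstPoly j).eval (-(ℓ : ℚ)) = Nat.stirlingSecond (ℓ + j) ℓ := by
  induction j generalizing ℓ with
  | zero => simp [stirlingFirstPoly, Nat.stirlingSecond_self]
  | succ j ih =>
    induction ℓ with
    | zero => simp [stirlingFirstPoly_succ_eval_zero, Nat.stirlingSecond_succ_zero]
    | succ ℓ ihℓ =>
      have h := stirlingFirstPoly_succ_eval_add_one j (-((ℓ + 1 : ℕ) : ℚ))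
      rw [show -((ℓ + 1 : ℕ) : ℚ) + 1 = -(ℓ : ℚ) by push_cast; ring, ihℓ, ih,
        show ℓ + 1 + j = ℓ + (j + 1) by omega] at h
      rw [show ℓ + 1 + (j + 1) = ℓ + (j + 1) + 1 by omega, Nat.stirlingSecond_succ_succ]
      push_cast at h ⊢
      linarith

theorem stirling1Poly_eval_neg_general (j : ℕ) (q : Polynomial ℚ)
    (hq : ∃ M : ℕ, ∀ m : ℕ, M ≤ m → q.eval (m : ℚ) = stirling1 m (m - j)) :
    ∀ ℓ : ℕ, 1 ≤ ℓ → q.eval (-(ℓ : ℚ)) = stirling2 (ℓ + j) ℓ := by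
  obtain ⟨M, hM⟩ := hq
  have hq_eq : q = stirlingFirstPoly j := by
    refine eq_of_eventually_eval_natCast_eq <|
      Filter.eventually_atTop.mpr ⟨M + 1, fun m hm => ?_⟩
    rw [hM m (by omega), stirlingFirstPoly_eval_natCast j (by omega), stirling1_eq_stirlingFirst]
  intro ℓ _
  rw [hq_eq, stirlingFirstPoly_eval_neg_natCast, stirling2_eq_stirlingSecond]

/-- Stirling duality `s(-ℓ, -ℓ-j) = S(ℓ+j, ℓ)`: for `j ≥ 1`, if `q` is the (unique)
polynomial of degree (at most) `2j` with `q(m) = s(m, m-j)` for all sufficiently large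
natural numbers `m`, then `q(-ℓ) = S(ℓ+j, ℓ)` for every `ℓ ≥ 1`. -/
theorem stirling1Poly_eval_neg (j : ℕ) (hj : 1 ≤ j) (q : Polynomial ℚ)
    (hdeg : q.degree ≤ 2 * j)
    (hq : ∃ M : ℕ, ∀ m : ℕ, M ≤ m → q.eval (m : ℚ) = stirling1 m (m - j)) :
    ∀ ℓ : ℕ, 1 ≤ ℓ → q.eval (-(ℓ : ℚ)) = stirling2 (ℓ + j) ℓ :=
  stirling1Poly_eval_neg_general j q hq
end

section
/- For every natural number j and ℓ ≥ 1, the value of the polynomial extension of x ↦ s(ℓx, ℓx - j) at x = -1 equals S(ℓ+j, ℓ); that is, if q is a polynomial with q(r) = s(ℓr, ℓr - j) for all natural numbers r, then q(-1) = S(ℓ+j, ℓ). -/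
open Polynomial

/-- `s(n, n-j)` with the convention that it is `0` when `n - j < 0`. -/
def stirling1Shift (n j : ℕ) : ℤ :=
  if j ≤ n then (stirling1 n (n - j) : ℤ) else 0


lemma delta_descPochhammer (k : ℕ) :
    (descPochhammer ℚ (k+1)).comp (X + 1) - descPochhammer ℚ (k+1)
      = ((k:ℚ)+1) • descPochhammer ℚ k := by
  have h1 : (descPochhammer ℚ (k+1)).comp (X + 1) = (X + 1) * descPochhammer ℚ k := by
    rw [descPochhammer_succ_left, mul_comp, X_comp, comp_assoc, sub_comp, X_comp, one_comp]
    simp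
  have h2 : ((k:ℚ[X])) = C (k:ℚ) := (C_eq_natCast k).symm
  rw [h1, descPochhammer_succ_right, smul_eq_C_mul, h2, map_add, map_one]
  ring

lemma exists_delta_aux : ∀ n : ℕ, ∀ p : ℚ[X], p.natDegree ≤ n →
    ∃ R : ℚ[X], R.comp (X + 1) - R = p := by
  intro n
  induction n with
  | zero =>
    intro p hp
    refine ⟨C (p.coeff 0) * X, ?_⟩
    have := Polynomial.eq_C_of_natDegree_le_zero hp
    rw [this]
    simp [mul_comp, mul_add]
  | succ n ih =>
    intro p hp
    set c := p.coeff (n+1) with hc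
    have hmonic := monic_descPochhammer ℚ (n+1)
    have hdeg : (descPochhammer ℚ (n+1)).natDegree = n+1 := descPochhammer_natDegree ℚ (n+1)
    have hp' : (p - c • descPochhammer ℚ (n+1)).natDegree ≤ n := by
      apply Polynomial.natDegree_le_iff_coeff_eq_zero.mpr
      intro m hm
      rw [Polynomial.coeff_sub, Polynomial.coeff_smul]
      rcases eq_or_lt_of_le (Nat.succ_le_of_lt hm) with h | h
      · have hcoef : (descPochhammer ℚ (n+1)).coeff (n+1) = 1 := by
          have := hmonic.leadingCoeff
          rwa [Polynomial.leadingCoeff, hdeg] at this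
        rw [← h, hcoef]
        simp [hc]
      · rw [Polynomial.coeff_eq_zero_of_natDegree_lt (lt_of_le_of_lt hp h),
          Polynomial.coeff_eq_zero_of_natDegree_lt (by rw [hdeg]; exact h)]
        simp
    obtain ⟨R', hR'⟩ := ih _ hp'
    refine ⟨(c / ((n:ℚ)+1+1)) • descPochhammer ℚ (n+2) + R', ?_⟩
    have hd := delta_descPochhammer (n+1)
    rw [add_comp, smul_comp]
    have : ((n:ℚ)+1+1) ≠ 0 := by positivity
    calc (c / ((n:ℚ)+1+1)) • (descPochhammer ℚ (n+2)).comp (X+1) + R'.comp (X+1)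
        - ((c / ((n:ℚ)+1+1)) • descPochhammer ℚ (n+2) + R')
        = (c / ((n:ℚ)+1+1)) • ((descPochhammer ℚ (n+2)).comp (X+1) - descPochhammer ℚ (n+2))
          + (R'.comp (X+1) - R') := by ring_nf; rw [smul_sub]; ring
      _ = p := by
          have : (c / ((n:ℚ)+1+1)) • (((n:ℚ)+1+1) • descPochhammer ℚ (n+1))
              = c • descPochhammer ℚ (n+1) := by
            rw [smul_smul, div_mul_cancel₀ _ this]
          rw [hR']
          push_cast at hd ⊢
          rw [hd, this]
          ring

lemma exists_antideriv (p : ℚ[X]) :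
    ∃ R : ℚ[X], R.comp (X + 1) - R = p ∧ R.eval 0 = 0 := by
  obtain ⟨R, hR⟩ := exists_delta_aux p.natDegree p le_rfl
  refine ⟨R - C (R.eval 0), ?_, by simp⟩
  rw [sub_comp, C_comp]
  rw [show R.comp (X+1) - C (R.eval 0) - (R - C (R.eval 0)) = R.comp (X+1) - R by ring, hR]

noncomputable def Ppoly : ℕ → ℚ[X]
  | 0 => 1
  | j+1 => (exists_antideriv (X * Ppoly j)).choose

lemma Ppoly_delta (j : ℕ) :
    (Ppoly (j+1)).comp (X + 1) - Ppoly (j+1) = X * Ppoly j :=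
  (exists_antideriv (X * Ppoly j)).choose_spec.1

lemma Ppoly_eval_zero (j : ℕ) : (Ppoly (j+1)).eval 0 = 0 :=
  (exists_antideriv (X * Ppoly j)).choose_spec.2

lemma Ppoly_delta_eval (j : ℕ) (x : ℚ) :
    (Ppoly (j+1)).eval (x + 1) - (Ppoly (j+1)).eval x = x * (Ppoly j).eval x := by
  have := congrArg (Polynomial.eval x) (Ppoly_delta j)
  simpa [eval_comp] using this

lemma stirling1_eq_zero_of_lt : ∀ n k : ℕ, n < k → stirling1 n k = 0 := by
  intro n
  induction n with
  | zero => intro k hk; match k, hk with | k+1, _ => rfl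
  | succ n ih =>
    intro k hk
    match k, hk with
    | k+1, hk =>
      have h1 : n < k := by omega
      have h2 : n < k+1 := by omega
      simp [stirling1, ih _ h1, ih _ h2]

lemma stirling1_self (n : ℕ) : stirling1 n n = 1 := by
  induction n with
  | zero => rfl
  | succ n ih => simp [stirling1, ih, stirling1_eq_zero_of_lt n (n+1) (by omega)]

lemma stirling2_eq_zero_of_lt : ∀ n k : ℕ, n < k → stirling2 n k = 0 := by
  intro n
  induction n with
  | zero => intro k hk; match k, hk with | k+1, _ => rfl
  | succ n ih =>
    intro k hk
    match k, hk with
    | k+1, hk =>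
      have h1 : n < k := by omega
      have h2 : n < k+1 := by omega
      simp [stirling2, ih _ h1, ih _ h2]

lemma stirling2_self (n : ℕ) : stirling2 n n = 1 := by
  induction n with
  | zero => rfl
  | succ n ih => simp [stirling2, ih, stirling2_eq_zero_of_lt n (n+1) (by omega)]

lemma stirling1Shift_zero (n : ℕ) : stirling1Shift n 0 = 1 := by
  simp [stirling1Shift, stirling1_self]

lemma stirling1_zero_right (n : ℕ) : stirling1 (n+1) 0 = 0 := rfl

lemma stirling1Shift_rec (n j : ℕ) :
    stirling1Shift (n+1) (j+1) = stirling1Shift n (j+1) + n * stirling1Shift n j := by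
  unfold stirling1Shift
  rcases le_or_gt (j+1) n with h | h
  · rw [if_pos (by omega), if_pos h, if_pos (by omega)]
    have h1 : n + 1 - (j+1) = (n - (j+1)) + 1 := by omega
    have h2 : n - j = (n - (j+1)) + 1 := by omega
    rw [h1, show stirling1 (n+1) ((n-(j+1))+1) = stirling1 n (n-(j+1)) + n * stirling1 n ((n-(j+1))+1) from rfl, h2]
    push_cast
    ring
  · rcases Nat.lt_or_ge n j with h' | h'
    · rw [if_neg (by omega), if_neg (by omega), if_neg (by omega)]
      ring
    · -- j ≤ n < j+1 so n = j
      have hn : n = j := by omega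
      subst hn
      rw [if_pos (by omega), if_neg (by omega), if_pos le_rfl]
      rw [Nat.sub_self, Nat.sub_self]
      cases n with
      | zero => simp [stirling1]
      | succ m => simp [stirling1_zero_right]

lemma Ppoly_eval_nat (j : ℕ) : ∀ n : ℕ, (Ppoly j).eval (n : ℚ) = (stirling1Shift n j : ℚ) := by
  induction j with
  | zero =>
    intro n
    simp [Ppoly, stirling1Shift_zero]
  | succ j ih =>
    intro n
    induction n with
    | zero =>
      simpa [stirling1Shift] using Ppoly_eval_zero j
    | succ n ihn =>
      have h := Ppoly_delta_eval j (n : ℚ)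
      have : (Ppoly (j+1)).eval ((n:ℚ)+1) = (Ppoly (j+1)).eval (n:ℚ) + n * (Ppoly j).eval (n:ℚ) := by
        linarith
      push_cast
      rw [this, ihn, ih n, stirling1Shift_rec n j]
      push_cast
      ring

lemma Ppoly_eval_neg (j : ℕ) : ∀ m : ℕ, (Ppoly j).eval (-(m : ℚ)) = stirling2 (m + j) m := by
  induction j with
  | zero =>
    intro m
    simp [Ppoly, stirling2_self]
  | succ j ih =>
    intro m
    induction m with
    | zero =>
      have := Ppoly_eval_zero j
      simp only [Nat.cast_zero, neg_zero, this, Nat.zero_add]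
      rw [show stirling2 (j+1) 0 = 0 from rfl]
      simp
    | succ m ihm =>
      have h := Ppoly_delta_eval j (-((m:ℚ)+1))
      have h1 : (-((m:ℚ)+1)) + 1 = -(m:ℚ) := by ring
      rw [h1] at h
      have h2 : (Ppoly (j+1)).eval (-((m:ℚ)+1))
          = (Ppoly (j+1)).eval (-(m:ℚ)) + ((m:ℚ)+1) * (Ppoly j).eval (-((m:ℚ)+1)) := by
        linarith
      have h3 : (Ppoly j).eval (-((m:ℚ)+1)) = stirling2 (m + 1 + j) (m+1) := by
        have := ih (m+1)
        push_cast at this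
        convert this using 2
      push_cast
      rw [h2, ihm, h3]
      rw [show m + 1 + (j+1) = (m + j + 1) + 1 from by ring,
        show stirling2 ((m+j+1)+1) (m+1) = stirling2 (m+j+1) m + (m+1) * stirling2 (m+j+1) (m+1) from rfl]
      rw [show m + (j+1) = m + j + 1 from by ring, show m + 1 + j = m + j + 1 from by ring]
      push_cast
      ring

/-- For every `j` and `ℓ ≥ 1`: if `q` is a polynomial with `q(r) = s(ℓr, ℓr-j)` for all
natural numbers `r`, then `q(-1) = S(ℓ+j, ℓ)`. -/
theorem stirling1_polyExt_eval_neg_one (j ℓ : ℕ) (hℓ : 1 ≤ ℓ) (q : Polynomial ℚ)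
    (hq : ∀ r : ℕ, q.eval (r : ℚ) = (stirling1Shift (ℓ * r) j : ℚ)) :
    q.eval (-1) = stirling2 (ℓ + j) ℓ := by
  have hqr : q = (Ppoly j).comp (C (ℓ:ℚ) * X) := by
    apply Polynomial.eq_of_infinite_eval_eq
    apply Set.Infinite.mono (s := Set.range (Nat.cast : ℕ → ℚ))
    · rintro x ⟨n, rfl⟩
      simp only [Set.mem_setOf_eq, eval_comp, eval_mul, eval_C, eval_X]
      rw [hq n, ← Nat.cast_mul, Ppoly_eval_nat]
    · exact Set.infinite_range_of_injective Nat.cast_injective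
  rw [hqr]
  simp only [eval_comp, eval_mul, eval_C, eval_X, mul_neg_one]
  exact Ppoly_eval_neg j ℓ
end
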